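/- Let Z_p, Z_q ⊆ ℝ^d be nonempty compact sets, S ∪ U a partition of {1,...,d}, s ∈ {-1,+1}^d a sign vector, and A ∈ ℝ^d with sign(A_i) ∈ {0, s_i} for all i (i.e., A lies in the closed orthant determined by s). Define Z̄_q = {z ⊙ s : z ∈ Z_q} (componentwise product) and Z̄_p similarly. Suppose for every w ∈ Z̄_p there exists w' ∈ Z̄_q with w'_i ≥ w_i for all i and w'_j > w_j for all j ∈ U, and that max_{z∈Z_p} ⟨A,z⟩ = max_{z∈Z_q} ⟨A,z⟩. Then A_j = 0 for all j ∈ U. -/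

import Mathlib

/-!
Reflecting every coordinate by its sign `s i` preserves `⟨A, z⟩` and moves `A` into the
nonnegative orthant. There a weakly larger point that is strictly larger on `U` has a strictly
larger value of `⟨A, ·⟩` as soon as some `A j` with `j ∈ U` is nonzero. Applied to a maximiser
of `⟨A, ·⟩` on `Zp`, this gives a point of `Zq` beating the maximum over `Zp`.
-/

section DotProduct

variable {n R : Type*} [Fintype n]

lemma dotProduct_mul_mul_of_mul_self_eq_one [CommSemiring R] {s : n → R}
    (hs : ∀ i, s i * s i = 1) (v w : n → R) : (s * v) ⬝ᵥ (w * s) = v ⬝ᵥ w := by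
  refine Finset.sum_congr rfl fun i _ => ?_
  calc s i * v i * (w i * s i) = (s i * s i) * (v i * w i) := by ring
    _ = v i * w i := by rw [hs i, one_mul]

lemma dotProduct_lt_dotProduct_of_nonneg_left [Semiring R] [PartialOrder R]
    [IsStrictOrderedRing R] {u v w : n → R} (huv : u ≤ v) (hw : 0 ≤ w) {j : n}
    (hj : 0 < w j) (huvj : u j < v j) : w ⬝ᵥ u < w ⬝ᵥ v :=
  Finset.sum_lt_sum (fun i _ => mul_le_mul_of_nonneg_left (huv i) (hw i))
    ⟨j, Finset.mem_univ j, mul_lt_mul_of_pos_left huvj hj⟩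

end DotProduct

lemma IsCompact.sSup_image_lt_sSup_image {X : Type*} [TopologicalSpace X] {f : X → ℝ}
    {K L : Set X} (hK : IsCompact K) (hK₀ : K.Nonempty) (hf : ContinuousOn f K)
    (hL : BddAbove (f '' L)) (hKL : ∀ x ∈ K, ∃ y ∈ L, f x < f y) :
    sSup (f '' K) < sSup (f '' L) := by
  obtain ⟨x, hx, hx_max⟩ := hK.exists_sSup_image_eq hK₀ hf
  obtain ⟨y, hy, hxy⟩ := hKL x hx
  rw [← hx_max] at hxy
  exact hxy.trans_le (le_csSup hL ⟨y, hy, rfl⟩)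

theorem stmt_6_general (d : ℕ) (Zp Zq : Set (Fin d → ℝ)) (hZp : Zp.Nonempty)
    (hcp : IsCompact Zp) (hcq : IsCompact Zq)
    (U : Set (Fin d))
    (s : Fin d → ℝ) (hs : ∀ i, s i = 1 ∨ s i = -1)
    (A : Fin d → ℝ) (hA : ∀ i, 0 ≤ s i * A i)
    (hvar : ∀ w ∈ (fun z (i : Fin d) => z i * s i) '' Zp,
      ∃ w' ∈ (fun z (i : Fin d) => z i * s i) '' Zq,
        (∀ i, w i ≤ w' i) ∧ ∀ j ∈ U, w j < w' j)
    (hmax : sSup ((fun z => ∑ i, A i * z i) '' Zp) = sSup ((fun z => ∑ i, A i * z i) '' Zq)) :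
    ∀ j ∈ U, A j = 0 := by
  intro j hj
  by_contra hAj
  have hs_sq : ∀ i, s i * s i = 1 := fun i => by rcases hs i with h | h <;> norm_num [h]
  have hsA_j : 0 < s j * A j :=
    (hA j).lt_of_ne (mul_ne_zero (left_ne_zero_of_mul_eq_one (hs_sq j)) hAj).symm
  have hcont : Continuous (A ⬝ᵥ ·) := continuous_const.dotProduct continuous_id
  refine (hcp.sSup_image_lt_sSup_image hZp hcont.continuousOn
    (hcq.image hcont).bddAbove fun x hx => ?_).ne hmax
  obtain ⟨-, ⟨y, hy, rfl⟩, hle, hlt⟩ := hvar _ ⟨x, hx, rfl⟩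
  refine ⟨y, hy, ?_⟩
  rw [← dotProduct_mul_mul_of_mul_self_eq_one hs_sq A x,
    ← dotProduct_mul_mul_of_mul_self_eq_one hs_sq A y]
  exact dotProduct_lt_dotProduct_of_nonneg_left hle hA hsA_j (hlt j hj)

/-- Orthant extension: if A lies in the closed orthant with sign vector s and the
sign-transformed supports satisfy the variability condition, then invariance of the
maximum of ⟨A,·⟩ forces A to vanish on the unstable coordinates U. -/
theorem stmt_6 (d : ℕ) (Zp Zq : Set (Fin d → ℝ)) (hZp : Zp.Nonempty) (hZq : Zq.Nonempty)
    (hcp : IsCompact Zp) (hcq : IsCompact Zq)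
    (S U : Set (Fin d)) (hpart : S ∪ U = Set.univ) (hdisj : Disjoint S U)
    (s : Fin d → ℝ) (hs : ∀ i, s i = 1 ∨ s i = -1)
    (A : Fin d → ℝ) (hA : ∀ i, 0 ≤ s i * A i)
    (hvar : ∀ w ∈ (fun z (i : Fin d) => z i * s i) '' Zp,
      ∃ w' ∈ (fun z (i : Fin d) => z i * s i) '' Zq,
        (∀ i, w i ≤ w' i) ∧ ∀ j ∈ U, w j < w' j)
    (hmax : sSup ((fun z => ∑ i, A i * z i) '' Zp) = sSup ((fun z => ∑ i, A i * z i) '' Zq)) :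
    ∀ j ∈ U, A j = 0 :=
  stmt_6_general d Zp Zq hZp hcp hcq U s hs A hA hvar hmax
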